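/- arXiv:2211.05890 — 2 statements merged into one kernel-verified Lean document; each statement's English description precedes it below -/
import Mathlib

section
/- Let k : [0,∞) → ℝ≥0 be a point-pair kernel on the hyperbolic plane with k supported in hyperbolic balls of radius ρ₀, and k_R the normalized indicator of the ball of radius R. Then for all z, w with hyperbolic distance conventions as above and 0 < ρ₀ < R: vol(B_{R−ρ₀})/vol(B_R) · (k_{R−ρ₀} ∗ k_{ρ₀})(z,w) ≤ k_R(z,w) ≤ vol(B_{R+ρ₀})/vol(B_R) · (k_{R+ρ₀} ∗ k_{ρ₀})(z,w), where vol(B_r) = 4π sinh²(r/2). -/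
/-!
The hyperbolic ball `B(w, r)` is the Euclidean disc with centre `w.re + i w.im cosh r` and radius
`w.im sinh r`. Integrating `y⁻²` over it chord by chord, with an explicit primitive in `y`, gives
`2π (cosh r - 1) = 4π sinh² (r / 2)`, so `μ(B(w, r)) = vol(B_r)`.

Since `(k_r ∗ k_ρ)(z, w) = vol(B_ρ)⁻¹ ∫_{B(w, ρ)} k_r(z, ·) dμ`, this convolution is at most
`vol(B_r)⁻¹`, and by the triangle inequality it vanishes when `dist z w > r + ρ` and equals
`vol(B_r)⁻¹` when `dist z w + ρ ≤ r`. Comparing with `k_R(z, w)` in the cases `dist z w ≤ R` and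
`dist z w > R` gives both bounds.
-/

open UpperHalfPlane MeasureTheory Real

noncomputable instance : MeasurableSpace UpperHalfPlane := borel UpperHalfPlane

/-- The hyperbolic measure `dμ(z) = y⁻² dx dy` on the upper half-plane, obtained by pulling
back Lebesgue measure on `ℂ` with density `Im(w)⁻²` along the inclusion `ℍ ↪ ℂ`. -/
noncomputable def hypMeasure : Measure UpperHalfPlane :=
  Measure.comap (fun z : UpperHalfPlane => (z : ℂ))
    ((volume : Measure ℂ).withDensity fun w => ENNReal.ofReal (1 / w.im ^ 2))

/-- The hyperbolic volume of a ball of radius `r`: `vol(B_r) = 4π sinh²(r/2)`. -/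
noncomputable def ballVol (r : ℝ) : ℝ := 4 * π * Real.sinh (r / 2) ^ 2

/-- `k_r(z,w) = vol(B_r)⁻¹ · 1[ρ(z,w) ≤ r]`, the normalised indicator of the hyperbolic
ball of radius `r`. -/
noncomputable def ballKernel (r : ℝ) (z w : UpperHalfPlane) : ℝ :=
  if dist z w ≤ r then (ballVol r)⁻¹ else 0

/-- The hyperbolic convolution `(k ∗ k')(z,w) = ∫_H k(z,ζ) k'(ζ,w) dμ(ζ)`. -/
noncomputable def ballConv (r r' : ℝ) (z w : UpperHalfPlane) : ℝ :=
  ∫ ζ, ballKernel r z ζ * ballKernel r' ζ w ∂hypMeasure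

instance : BorelSpace UpperHalfPlane := ⟨rfl⟩

open Set

section ChordIntegral

variable {a b y : ℝ}

lemma hasDerivAt_sqrt_chord_div (hs : 0 < a ^ 2 - (y - b) ^ 2) (hy : y ≠ 0) :
    HasDerivAt (fun y => √(a ^ 2 - (y - b) ^ 2) / y)
      (-(b * (y - b) + a ^ 2) / (√(a ^ 2 - (y - b) ^ 2) * y ^ 2)) y := by
  refine (((hasDerivAt_sqrt hs.ne').comp y ((hasDerivAt_const y (a ^ 2)).sub
    (((hasDerivAt_id y).sub_const b).pow 2))).div (hasDerivAt_id y) hy).congr_deriv ?_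
  have hs0 := (sqrt_pos.2 hs).ne'
  have hs' := sq_sqrt hs.le
  simp only [id, Function.comp_apply, Pi.sub_apply, Pi.pow_apply]
  field_simp
  linear_combination (-2) * hs'

lemma hasDerivAt_arcsin_sub_div (ha : 0 < a) (hs : 0 < a ^ 2 - (y - b) ^ 2) :
    HasDerivAt (fun y => arcsin ((y - b) / a)) (1 / √(a ^ 2 - (y - b) ^ 2)) y := by
  have hlt : ((y - b) / a) ^ 2 < 1 := by
    rw [div_pow, div_lt_one (by positivity)]; linarith
  have h1 := abs_lt.1 ((sq_lt_one_iff_abs_lt_one _).1 hlt)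
  refine ((hasDerivAt_arcsin h1.1.ne' h1.2.ne).comp y
    (((hasDerivAt_id y).sub_const b).div_const a)).congr_deriv ?_
  have : 1 - ((y - b) / a) ^ 2 = (a ^ 2 - (y - b) ^ 2) / a ^ 2 := by field_simp
  rw [this, sqrt_div' _ (sq_nonneg a), sqrt_sq ha.le]
  field_simp

lemma hasDerivAt_arcsin_chord (ha : 0 < a) (hab : a < b) (hs : 0 < a ^ 2 - (y - b) ^ 2)
    (hy : 0 < y) :
    HasDerivAt (fun y => arcsin ((b * (y - b) + a ^ 2) / (a * y)))
      (√(b ^ 2 - a ^ 2) / (√(a ^ 2 - (y - b) ^ 2) * y)) y := by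
  have hd := sq_sqrt (by nlinarith : 0 ≤ b ^ 2 - a ^ 2)
  have hd0 : 0 < √(b ^ 2 - a ^ 2) := sqrt_pos.2 (by nlinarith)
  have hs' := sq_sqrt hs.le
  have hs0 : 0 < √(a ^ 2 - (y - b) ^ 2) := sqrt_pos.2 hs
  set g := (b * (y - b) + a ^ 2) / (a * y)
  have hg : 1 - g ^ 2 = (√(b ^ 2 - a ^ 2) * √(a ^ 2 - (y - b) ^ 2) / (a * y)) ^ 2 := by
    simp only [g, div_pow, mul_pow, hd, hs']; field_simp; ring
  have hlt : g ^ 2 < 1 := by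
    have : 0 < 1 - g ^ 2 := hg ▸ by positivity
    linarith
  have h1 := abs_lt.1 ((sq_lt_one_iff_abs_lt_one _).1 hlt)
  refine ((hasDerivAt_arcsin h1.1.ne' h1.2.ne).comp y
    (((((hasDerivAt_id y).sub_const b).const_mul b).add_const (a ^ 2)).div
      ((hasDerivAt_id y).const_mul a) (by positivity))).congr_deriv ?_
  rw [hg, sqrt_sq (by positivity)]
  simp only [id]
  field_simp
  linear_combination -hd

-- `2 √(a² - (y - b)²)` is the length of the horizontal chord at height `y` of a disc of radius `a`
-- centred at height `b`.
noncomputable def chordPrimitive (a b y : ℝ) : ℝ :=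
  -2 * (√(a ^ 2 - (y - b) ^ 2) / y) - 2 * arcsin ((y - b) / a)
    + 2 * (b / √(b ^ 2 - a ^ 2)) * arcsin ((b * (y - b) + a ^ 2) / (a * y))

lemma hasDerivAt_chordPrimitive (ha : 0 < a) (hab : a < b) (hy : y ∈ Ioo (b - a) (b + a)) :
    HasDerivAt (chordPrimitive a b) (2 * √(a ^ 2 - (y - b) ^ 2) / y ^ 2) y := by
  have hy0 : 0 < y := by linarith [hy.1]
  have hs : 0 < a ^ 2 - (y - b) ^ 2 := by nlinarith [hy.1, hy.2]
  have hd0 : 0 < √(b ^ 2 - a ^ 2) := sqrt_pos.2 (by nlinarith)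
  have hs0 : 0 < √(a ^ 2 - (y - b) ^ 2) := sqrt_pos.2 hs
  refine ((((hasDerivAt_sqrt_chord_div hs hy0.ne').const_mul (-2)).sub
    ((hasDerivAt_arcsin_sub_div ha hs).const_mul 2)).add
    ((hasDerivAt_arcsin_chord ha hab hs hy0).const_mul _)).congr_deriv ?_
  field_simp
  linear_combination -sq_sqrt hs.le

lemma continuousOn_chordPrimitive (ha : 0 < a) (hab : a < b) :
    ContinuousOn (chordPrimitive a b) (Icc (b - a) (b + a)) := by
  have hy0 : ∀ y ∈ Icc (b - a) (b + a), y ≠ 0 := fun y hy => by linarith [hy.1]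
  unfold chordPrimitive
  refine ((continuousOn_const.mul ((by fun_prop : Continuous fun y => √(a ^ 2 - (y - b) ^ 2))
    |>.continuousOn.div continuousOn_id hy0)).sub (by fun_prop)).add
    (continuousOn_const.mul (continuous_arcsin.comp_continuousOn ?_))
  exact (by fun_prop : Continuous fun y => b * (y - b) + a ^ 2).continuousOn.div (by fun_prop)
    fun y hy => mul_ne_zero ha.ne' (hy0 y hy)

lemma chordPrimitive_right (ha : 0 < a) (hab : a < b) :
    chordPrimitive a b (b + a) = π * (b / √(b ^ 2 - a ^ 2) - 1) := by
  have h : (b * a + a ^ 2) / (a * (b + a)) = 1 := by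
    rw [div_eq_one_iff_eq (by nlinarith)]; ring
  rw [chordPrimitive, add_sub_cancel_left, sub_self, sqrt_zero, div_self ha.ne', h, arcsin_one]
  ring

lemma chordPrimitive_left (ha : 0 < a) (hab : a < b) :
    chordPrimitive a b (b - a) = -π * (b / √(b ^ 2 - a ^ 2) - 1) := by
  have h : (b * -a + a ^ 2) / (a * (b - a)) = -1 := by
    rw [div_eq_iff (by nlinarith)]; ring
  rw [chordPrimitive, sub_sub_cancel_left, neg_sq, sub_self, sqrt_zero, neg_div, div_self ha.ne', h,
    arcsin_neg_one]
  ring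

lemma intervalIntegrable_chord_div_sq (ha : 0 < a) (hab : a < b) :
    IntervalIntegrable (fun y => 2 * √(a ^ 2 - (y - b) ^ 2) / y ^ 2) volume (b - a) (b + a) := by
  refine ContinuousOn.intervalIntegrable ?_
  rw [uIcc_of_le (by linarith)]
  exact (by fun_prop : Continuous fun y => 2 * √(a ^ 2 - (y - b) ^ 2)).continuousOn.div
    (by fun_prop) fun y hy => pow_ne_zero 2 (by linarith [hy.1])

lemma integral_chord_div_sq (ha : 0 < a) (hab : a < b) :
    ∫ y in (b - a)..(b + a), 2 * √(a ^ 2 - (y - b) ^ 2) / y ^ 2 =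
      2 * π * (b / √(b ^ 2 - a ^ 2) - 1) := by
  rw [intervalIntegral.integral_eq_sub_of_hasDerivAt_of_le (by linarith)
    (continuousOn_chordPrimitive ha hab) (fun y hy => hasDerivAt_chordPrimitive ha hab hy)
    (intervalIntegrable_chord_div_sq ha hab), chordPrimitive_right ha hab,
    chordPrimitive_left ha hab]
  ring

lemma lintegral_chord_div_sq (ha : 0 < a) (hab : a < b) :
    ∫⁻ y, ENNReal.ofReal (2 * √(a ^ 2 - (y - b) ^ 2) / y ^ 2) =
      ENNReal.ofReal (2 * π * (b / √(b ^ 2 - a ^ 2) - 1)) := by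
  have hsupp : (fun y => ENNReal.ofReal (2 * √(a ^ 2 - (y - b) ^ 2) / y ^ 2)).support ⊆
      Ioc (b - a) (b + a) := by
    intro y hy
    by_contra hy'
    have : a ^ 2 - (y - b) ^ 2 ≤ 0 := by
      rw [mem_Ioc, not_and_or, not_lt, not_le] at hy'
      rcases hy' with h | h <;> nlinarith
    simp [sqrt_eq_zero_of_nonpos this] at hy
  rw [← setLIntegral_eq_of_support_subset hsupp, ← ofReal_integral_eq_lintegral_ofReal
    (intervalIntegrable_chord_div_sq ha hab).1 (ae_of_all _ fun y => by positivity),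
    ← intervalIntegral.integral_of_le (by linarith), integral_chord_div_sq ha hab]

end ChordIntegral

lemma volume_setOf_sq_sub_le (x₀ t : ℝ) :
    volume {x : ℝ | (x - x₀) ^ 2 ≤ t} = ENNReal.ofReal (2 * √t) := by
  rcases le_or_gt 0 t with ht | ht
  · have : {x : ℝ | (x - x₀) ^ 2 ≤ t} = Metric.closedBall x₀ √t := by
      ext x
      rw [mem_ofPred_eq, Real.sq_le ht, Metric.mem_closedBall, Real.dist_eq, abs_le]
    rw [this, Real.volume_closedBall]
  · have : {x : ℝ | (x - x₀) ^ 2 ≤ t} = ∅ :=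
      eq_empty_of_forall_notMem fun x hx => (sq_nonneg (x - x₀)).not_gt (hx.trans_lt ht)
    rw [this, measure_empty, sqrt_eq_zero_of_nonpos ht.le, mul_zero, ENNReal.ofReal_zero]

lemma lintegral_closedBall_inv_im_sq (c : ℂ) {a : ℝ} (ha : 0 < a) (hac : a < c.im) :
    ∫⁻ z in Metric.closedBall c a, ENNReal.ofReal (1 / z.im ^ 2) =
      ENNReal.ofReal (2 * π * (c.im / √(c.im ^ 2 - a ^ 2) - 1)) := by
  set D := {p : ℝ × ℝ | (p.1 - c.re) ^ 2 + (p.2 - c.im) ^ 2 ≤ a ^ 2}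
  have hD : Complex.measurableEquivRealProd.symm ⁻¹' Metric.closedBall c a = D := by
    ext p
    rw [mem_preimage, Metric.mem_closedBall, Complex.dist_eq_re_im, sqrt_le_left ha.le]
    rfl
  have hDm : MeasurableSet D := measurableSet_le (by fun_prop) (by fun_prop)
  have hslice (y : ℝ) : ∫⁻ x, D.indicator (fun p => ENNReal.ofReal (1 / p.2 ^ 2)) (x, y) =
      ENNReal.ofReal (2 * √(a ^ 2 - (y - c.im) ^ 2) / y ^ 2) := by
    have : (fun x => D.indicator (fun p => ENNReal.ofReal (1 / p.2 ^ 2)) (x, y)) =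
        {x | (x - c.re) ^ 2 ≤ a ^ 2 - (y - c.im) ^ 2}.indicator
          fun _ => ENNReal.ofReal (1 / y ^ 2) := by
      ext x
      simp only [indicator, D, mem_ofPred_eq, le_sub_iff_add_le]
    rw [this, lintegral_indicator_const (measurableSet_le (by fun_prop) (by fun_prop)),
      volume_setOf_sq_sub_le, ← ENNReal.ofReal_mul (by positivity), one_div_mul_eq_div]
  rw [← (Complex.volume_preserving_equiv_real_prod.symm _).setLIntegral_comp_preimage_emb
    Complex.measurableEquivRealProd.symm.measurableEmbedding, hD]
  simp only [Complex.measurableEquivRealProd_symm_apply]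
  rw [← lintegral_indicator hDm, Measure.volume_eq_prod, lintegral_prod_symm _
    ((by fun_prop : Measurable fun p : ℝ × ℝ => ENNReal.ofReal (1 / p.2 ^ 2)).indicator
      hDm).aemeasurable]
  simp only [hslice]
  exact lintegral_chord_div_sq ha hac

lemma hypMeasure_closedBall (w : ℍ) {r : ℝ} (hr : 0 < r) :
    hypMeasure (Metric.closedBall w r) = ENNReal.ofReal (ballVol r) := by
  have ha : 0 < w.im * sinh r := mul_pos w.im_pos (sinh_pos_iff.2 hr)
  have hac : w.im * sinh r < (w.center r : ℂ).im := by
    rw [coe_im, center_im]; exact mul_lt_mul_of_pos_left (sinh_lt_cosh r) w.im_pos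
  rw [hypMeasure, isOpenEmbedding_coe.measurableEmbedding.comap_apply, image_coe_closedBall,
    withDensity_apply _ measurableSet_closedBall, lintegral_closedBall_inv_im_sq _ ha hac,
    coe_im, center_im]
  have ht := w.im_pos
  have hsqrt : √((w.im * cosh r) ^ 2 - (w.im * sinh r) ^ 2) = w.im := by
    rw [mul_pow, mul_pow, ← mul_sub, cosh_sq, add_sub_cancel_left, mul_one, sqrt_sq ht.le]
  have hcosh : cosh r = 2 * sinh (r / 2) ^ 2 + 1 := by
    have := cosh_two_mul (r / 2)
    rw [mul_div_cancel₀ r two_ne_zero, cosh_sq] at this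
    linarith
  rw [hsqrt, mul_div_cancel_left₀ _ ht.ne', ballVol, hcosh]
  congr 1
  ring

lemma ballVol_nonneg (r : ℝ) : 0 ≤ ballVol r := by
  unfold ballVol; positivity

lemma measureReal_hypMeasure_closedBall (w : ℍ) {r : ℝ} (hr : 0 < r) :
    hypMeasure.real (Metric.closedBall w r) = ballVol r := by
  rw [measureReal_def, hypMeasure_closedBall w hr, ENNReal.toReal_ofReal (ballVol_nonneg r)]

lemma ballVol_pos {r : ℝ} (hr : 0 < r) : 0 < ballVol r := by
  have := sinh_pos_iff.2 (half_pos hr)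
  unfold ballVol; positivity

section BallKernel

variable {r ρ : ℝ} {z w : ℍ}

lemma ballKernel_nonneg : 0 ≤ ballKernel r z w := by
  unfold ballKernel; split_ifs
  exacts [inv_nonneg.2 (ballVol_nonneg r), le_rfl]

lemma ballKernel_le : ballKernel r z w ≤ (ballVol r)⁻¹ := by
  unfold ballKernel; split_ifs
  exacts [le_rfl, inv_nonneg.2 (ballVol_nonneg r)]

lemma ballConv_nonneg : 0 ≤ ballConv r ρ z w :=
  integral_nonneg fun _ => mul_nonneg ballKernel_nonneg ballKernel_nonneg

lemma ballConv_eq_mul_setIntegral :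
    ballConv r ρ z w =
      (ballVol ρ)⁻¹ * ∫ ζ in Metric.closedBall w ρ, ballKernel r z ζ ∂hypMeasure := by
  rw [← integral_indicator measurableSet_closedBall, ← integral_const_mul, ballConv]
  congr 1 with ζ
  by_cases hζ : dist ζ w ≤ ρ
  · simp [ballKernel, hζ, mul_comm]
  · simp [ballKernel, hζ]

lemma ballConv_le_inv_ballVol (hρ : 0 < ρ) : ballConv r ρ z w ≤ (ballVol r)⁻¹ := by
  have hint : ∫ ζ in Metric.closedBall w ρ, ballKernel r z ζ ∂hypMeasure ≤
      (ballVol r)⁻¹ * ballVol ρ := by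
    rw [← measureReal_hypMeasure_closedBall w hρ]
    refine (Real.le_norm_self _).trans <| norm_setIntegral_le_of_norm_le_const
      (by rw [hypMeasure_closedBall w hρ]; exact ENNReal.ofReal_lt_top) fun ζ _ => ?_
    rw [Real.norm_of_nonneg ballKernel_nonneg]
    exact ballKernel_le
  calc ballConv r ρ z w
      ≤ (ballVol ρ)⁻¹ * ((ballVol r)⁻¹ * ballVol ρ) := by
        rw [ballConv_eq_mul_setIntegral]
        exact mul_le_mul_of_nonneg_left hint (inv_nonneg.2 (ballVol_nonneg ρ))
    _ = (ballVol r)⁻¹ := by field_simp [(ballVol_pos hρ).ne']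

lemma ballConv_eq_zero_of_add_lt_dist (h : r + ρ < dist z w) : ballConv r ρ z w = 0 := by
  rw [ballConv_eq_mul_setIntegral, setIntegral_eq_zero_of_forall_eq_zero fun ζ hζ => ?_, mul_zero]
  exact if_neg fun hzζ => h.not_ge <| (dist_triangle z ζ w).trans (add_le_add hzζ hζ)

lemma ballConv_eq_inv_ballVol (hρ : 0 < ρ) (h : dist z w + ρ ≤ r) :
    ballConv r ρ z w = (ballVol r)⁻¹ := by
  have hball : EqOn (ballKernel r z) (fun _ => (ballVol r)⁻¹) (Metric.closedBall w ρ) :=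
    fun ζ hζ => if_pos <| (dist_triangle z w ζ).trans <| by
      rw [dist_comm w ζ]; linarith [Metric.mem_closedBall.1 hζ]
  rw [ballConv_eq_mul_setIntegral, setIntegral_congr_fun measurableSet_closedBall hball,
    setIntegral_const, measureReal_hypMeasure_closedBall w hρ, smul_eq_mul]
  field_simp [(ballVol_pos hρ).ne']

end BallKernel

/-- For `0 < ρ₀ < R` and all `z, w` in the upper half-plane:
`vol(B_{R-ρ₀})/vol(B_R) · (k_{R-ρ₀} ∗ k_{ρ₀})(z,w) ≤ k_R(z,w)
  ≤ vol(B_{R+ρ₀})/vol(B_R) · (k_{R+ρ₀} ∗ k_{ρ₀})(z,w)`,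
where `vol(B_r) = 4π sinh²(r/2)`. -/
theorem stmt7 (R ρ₀ : ℝ) (h₀ : 0 < ρ₀) (hR : ρ₀ < R) (z w : UpperHalfPlane) :
    ballVol (R - ρ₀) / ballVol R * ballConv (R - ρ₀) ρ₀ z w ≤ ballKernel R z w ∧
      ballKernel R z w ≤ ballVol (R + ρ₀) / ballVol R * ballConv (R + ρ₀) ρ₀ z w := by
  have hcoeff (r : ℝ) : 0 ≤ ballVol r / ballVol R :=
    div_nonneg (ballVol_nonneg r) (ballVol_nonneg R)
  by_cases hzw : dist z w ≤ R
  · have hconv : ballConv (R + ρ₀) ρ₀ z w = (ballVol (R + ρ₀))⁻¹ :=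
      ballConv_eq_inv_ballVol h₀ (by linarith)
    rw [ballKernel, if_pos hzw, hconv]
    constructor
    · calc ballVol (R - ρ₀) / ballVol R * ballConv (R - ρ₀) ρ₀ z w
          ≤ ballVol (R - ρ₀) / ballVol R * (ballVol (R - ρ₀))⁻¹ :=
            mul_le_mul_of_nonneg_left (ballConv_le_inv_ballVol h₀) (hcoeff _)
        _ = (ballVol R)⁻¹ := by field_simp [(ballVol_pos (sub_pos.2 hR)).ne']
    · exact le_of_eq (by field_simp [(ballVol_pos (by linarith : 0 < R + ρ₀)).ne'])
  · rw [ballKernel, if_neg hzw, ballConv_eq_zero_of_add_lt_dist (by linarith), mul_zero]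
    exact ⟨le_rfl, mul_nonneg (hcoeff _) ballConv_nonneg⟩
end

section
/- Let q be prime and let a_i/b_i, a_{i+1}/b_{i+1} be consecutive Farey fractions with a_{i+1}b_i − a_i b_{i+1} = 1 and q ∤ b_{i+1}. Choose v ∈ {1,…,q−1} with v·b_{i+1} ≡ b_i (mod q), and let W_q = [[0, −1/√q],[√q, 0]]. Then the matrix γ = [[a_{i+1}v − a_i, (b_{i+1}v − b_i)/q], [a_{i+1}q, b_{i+1}]] lies in Γ₀(q), and γ·W_q maps a_{i+1}/b_{i+1} to ∞ and a_i/b_i to v/q under the Möbius action. -/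
/-!
Read the Möbius action in projective coordinates: `x = a / b` corresponds to the column `(a, b)`,
and `γ W_q` sends it to `γ (W_q (a, b)) = (√q)⁻¹ • γ (-b, q a)`. Substituting
`q c = v b₂ - b₁` for the upper-right entry `c` of `γ`, the Farey relation gives
`γ (-b₂, q a₂) = (-1, 0)`, a point at infinity, and `γ (-b₁, q a₁) = (-v, -q)`, the fraction `v / q`.
The same two substitutions give `det γ = 1`.
-/

open Matrix

theorem Matrix.fin_two_apply_mul_div_add {K : Type*} [Field K] (M : Matrix (Fin 2) (Fin 2) K)
    (i : Fin 2) (a : K) {b : K} (hb : b ≠ 0) :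
    M i 0 * (a / b) + M i 1 = (M *ᵥ ![a, b]) i / b := by
  simp only [mulVec, dotProduct, Fin.sum_univ_two, cons_val_zero, cons_val_one]
  field_simp

theorem Matrix.of_mulVec_fin_two {α : Type*} [NonUnitalNonAssocSemiring α] (a b c d x y : α) :
    !![a, b; c, d] *ᵥ ![x, y] = ![a * x + b * y, c * x + d * y] :=
  (mulVecᵣ_eq _ _).symm

theorem mulVec_atkinLehner (q a b : ℝ) :
    !![0, -(√q)⁻¹; √q, 0] *ᵥ ![a, b] = (√q)⁻¹ • ![-b, q * a] := by
  rw [of_mulVec_fin_two, smul_cons, smul_cons, smul_empty]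
  congr 2
  · ring
  · rw [smul_eq_mul, inv_mul_eq_div, mul_comm q, mul_div_assoc, Real.div_sqrt]
    ring

/-- The matrix `γ`, with its upper-right entry `(v b₂ - b₁) / q` kept as a variable `c` subject to
`q c = v b₂ - b₁`, so that no integer division occurs. -/
def fareyGamma (q v a₁ a₂ b₂ c : ℤ) : Matrix (Fin 2) (Fin 2) ℤ :=
  !![a₂ * v - a₁, c; a₂ * q, b₂]

section fareyGamma

variable {q v a₁ b₁ a₂ b₂ c : ℤ}

theorem fareyGamma_det (hFarey : a₂ * b₁ - a₁ * b₂ = 1) (hc : v * b₂ - b₁ = q * c) :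
    (fareyGamma q v a₁ a₂ b₂ c).det = 1 := by
  rw [fareyGamma, det_fin_two_of]
  linear_combination hFarey + a₂ * hc

theorem fareyGamma_mulVec_right (hFarey : a₂ * b₁ - a₁ * b₂ = 1) (hc : v * b₂ - b₁ = q * c) :
    fareyGamma q v a₁ a₂ b₂ c *ᵥ ![-b₂, q * a₂] = ![-1, 0] := by
  rw [fareyGamma, of_mulVec_fin_two]
  congr 2
  · linear_combination -hFarey - a₂ * hc
  · ring

theorem fareyGamma_mulVec_left (hFarey : a₂ * b₁ - a₁ * b₂ = 1) (hc : v * b₂ - b₁ = q * c) :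
    fareyGamma q v a₁ a₂ b₂ c *ᵥ ![-b₁, q * a₁] = ![-v, -q] := by
  rw [fareyGamma, of_mulVec_fin_two]
  congr 2
  · linear_combination -v * hFarey - a₁ * hc
  · linear_combination -q * hFarey

end fareyGamma

theorem stmt10_general (q : ℕ) (hq : q.Prime) (v a₁ b₁ a₂ b₂ : ℤ)
    (hb₁ : 0 < b₁) (hb₂ : 0 < b₂)
    (hFarey : a₂ * b₁ - a₁ * b₂ = 1)
    (hmod : (q : ℤ) ∣ (v * b₂ - b₁)) :
    (!![a₂ * v - a₁, (v * b₂ - b₁) / q; a₂ * q, b₂] : Matrix (Fin 2) (Fin 2) ℤ).det = 1 ∧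
      (q : ℤ) ∣ (!![a₂ * v - a₁, (v * b₂ - b₁) / q; a₂ * q, b₂] :
          Matrix (Fin 2) (Fin 2) ℤ) 1 0 ∧
      (let M : Matrix (Fin 2) (Fin 2) ℝ :=
        ((!![a₂ * v - a₁, (v * b₂ - b₁) / q; a₂ * q, b₂] :
            Matrix (Fin 2) (Fin 2) ℤ).map (Int.cast : ℤ → ℝ)) *
          !![0, -(Real.sqrt q)⁻¹; Real.sqrt q, 0];
        M 1 0 * ((a₂ : ℝ) / (b₂ : ℝ)) + M 1 1 = 0 ∧
          (M 0 0 * ((a₁ : ℝ) / (b₁ : ℝ)) + M 0 1) /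
              (M 1 0 * ((a₁ : ℝ) / (b₁ : ℝ)) + M 1 1) = (v : ℝ) / (q : ℝ)) := by
  obtain ⟨c, hc⟩ := hmod
  have hγ : (!![a₂ * v - a₁, (v * b₂ - b₁) / q; a₂ * q, b₂] : Matrix (Fin 2) (Fin 2) ℤ) =
      fareyGamma q v a₁ a₂ b₂ c := by
    rw [hc, Int.mul_ediv_cancel_left _ (by exact_mod_cast hq.ne_zero), fareyGamma]
  rw [hγ]
  refine ⟨fareyGamma_det hFarey hc, dvd_mul_left _ _, ?_⟩
  intro M
  have hM (a b : ℤ) : M *ᵥ ![(a : ℝ), b] =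
      (√q)⁻¹ • (Int.cast ∘ (fareyGamma q v a₁ a₂ b₂ c *ᵥ ![-b, q * a])) := by
    ext i
    have hvec : ![(-b : ℝ), q * a] = Int.cast ∘ ![-b, q * a] := by
      ext j
      fin_cases j <;> simp
    rw [← mulVec_mulVec, mulVec_atkinLehner, mulVec_smul, hvec]
    simp only [Pi.smul_apply, Function.comp_apply]
    congr 1
    exact (RingHom.map_mulVec (Int.castRingHom ℝ) _ _ i).symm
  have hb₁' : (b₁ : ℝ) ≠ 0 := by exact_mod_cast hb₁.ne'
  have hb₂' : (b₂ : ℝ) ≠ 0 := by exact_mod_cast hb₂.ne'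
  have hsqrt : (√q)⁻¹ ≠ 0 := by simp [hq.ne_zero]
  constructor
  · rw [M.fin_two_apply_mul_div_add 1 _ hb₂', hM, fareyGamma_mulVec_right hFarey hc]
    simp
  · rw [M.fin_two_apply_mul_div_add 0 _ hb₁', M.fin_two_apply_mul_div_add 1 _ hb₁',
      div_div_div_cancel_right₀ hb₁', hM, fareyGamma_mulVec_left hFarey hc]
    simp [mul_div_mul_left _ _ hsqrt, neg_div_neg_eq]

/-- Let `q` be prime and `a₁/b₁ < a₂/b₂` consecutive Farey fractions
(positive denominators) with `a₂b₁ - a₁b₂ = 1` and `q ∤ b₂`.  Choose `v ∈ {1, …, q-1}` with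
`v·b₂ ≡ b₁ (mod q)`, and let `W_q = [[0, -1/√q], [√q, 0]]`.  Then the matrix
`γ = [[a₂v - a₁, (b₂v - b₁)/q], [a₂q, b₂]]` lies in `Γ₀(q)` (it is integral with
determinant `1` and lower-left entry divisible by `q`), and under the Möbius action,
`γ·W_q` maps `a₂/b₂` to `∞` (its denominator vanishes there) and maps `a₁/b₁` to `v/q`. -/
theorem stmt10 (q : ℕ) (hq : q.Prime) (v a₁ b₁ a₂ b₂ : ℤ)
    (hb₁ : 0 < b₁) (hb₂ : 0 < b₂) (hlt : a₁ * b₂ < a₂ * b₁)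
    (hFarey : a₂ * b₁ - a₁ * b₂ = 1) (hndvd : ¬ (q : ℤ) ∣ b₂)
    (hv₁ : 1 ≤ v) (hv₂ : v ≤ (q : ℤ) - 1) (hmod : (q : ℤ) ∣ (v * b₂ - b₁)) :
    (!![a₂ * v - a₁, (v * b₂ - b₁) / q; a₂ * q, b₂] : Matrix (Fin 2) (Fin 2) ℤ).det = 1 ∧
      (q : ℤ) ∣ (!![a₂ * v - a₁, (v * b₂ - b₁) / q; a₂ * q, b₂] :
          Matrix (Fin 2) (Fin 2) ℤ) 1 0 ∧
      (let M : Matrix (Fin 2) (Fin 2) ℝ :=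
        ((!![a₂ * v - a₁, (v * b₂ - b₁) / q; a₂ * q, b₂] :
            Matrix (Fin 2) (Fin 2) ℤ).map (Int.cast : ℤ → ℝ)) *
          !![0, -(Real.sqrt q)⁻¹; Real.sqrt q, 0];
        M 1 0 * ((a₂ : ℝ) / (b₂ : ℝ)) + M 1 1 = 0 ∧
          (M 0 0 * ((a₁ : ℝ) / (b₁ : ℝ)) + M 0 1) /
              (M 1 0 * ((a₁ : ℝ) / (b₁ : ℝ)) + M 1 1) = (v : ℝ) / (q : ℝ)) :=
  stmt10_general q hq v a₁ b₁ a₂ b₂ hb₁ hb₂ hFarey hmod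
end
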